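/- arXiv:0807.0644 — 2 statements merged into one kernel-verified Lean document; each statement's English description precedes it below -/
import Mathlib

section
/- Let c(x) = ∑_j c_j x_j be a linear cost with c_j > 0, and S a monotone set depending only on coordinates in D with |D| ≤ Δ. Suppose x ∉ S, β ≤ distance_c(x, S) := inf{c(x̂) − c(x) : x̂ ∈ S, x̂ ≥ x}, and x' is obtained from x by setting x'_j = x_j + β/c_j for j ∈ D and x'_j = x_j otherwise. Then c(x') − c(x) ≤ Δβ and residual_c(x) − residual_c(x') ≥ β, where residual_c(x) = inf{c(x̂) − c(x) : x̂ feasible, x̂ ≥ x} for feasibility = membership in all constraints including S (assume just the single constraint S: residual = distance to S). -/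
theorem greedy_step_linear {n : ℕ} (cj : Fin n → ℝ) (hc : ∀ j, 0 < cj j)
    (S : Set (Fin n → ℝ))
    (hmono : ∀ x y : Fin n → ℝ, x ∈ S → x ≤ y → y ∈ S)
    (D : Finset (Fin n))
    (hdep : ∀ x y : Fin n → ℝ, (∀ j ∈ D, x j = y j) → (x ∈ S ↔ y ∈ S))
    (Δ : ℝ) (hD : (D.card : ℝ) ≤ Δ)
    (hSne : S.Nonempty)
    (dist : (Fin n → ℝ) → ℝ)
    (hdist : ∀ x, dist x = sInf {d : ℝ | ∃ xhat, xhat ∈ S ∧ x ≤ xhat ∧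
      d = (∑ j, cj j * xhat j) - ∑ j, cj j * x j})
    (x : Fin n → ℝ) (hxnn : ∀ j, 0 ≤ x j) (hx : x ∉ S)
    (β : ℝ) (hβ0 : 0 ≤ β) (hβ : β ≤ dist x)
    (x' : Fin n → ℝ)
    (hx' : ∀ j, x' j = if j ∈ D then x j + β / cj j else x j) :
    (∑ j, cj j * x' j) - (∑ j, cj j * x j) ≤ Δ * β ∧
      dist x - dist x' ≥ β := by
  classical
  set A : (Fin n → ℝ) → Set ℝ := fun z => {d : ℝ | ∃ xhat, xhat ∈ S ∧ z ≤ xhat ∧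
      d = (∑ j, cj j * xhat j) - ∑ j, cj j * z j} with hA
  have hbdd : ∀ z : Fin n → ℝ, ∀ d ∈ A z, (0:ℝ) ≤ d := by
    rintro z d ⟨xhat, _, hle, rfl⟩
    have : ∑ j, cj j * z j ≤ ∑ j, cj j * xhat j :=
      Finset.sum_le_sum fun j _ => mul_le_mul_of_nonneg_left (hle j) (hc j).le
    linarith
  have hBdd : ∀ z : Fin n → ℝ, BddBelow (A z) := fun z => ⟨0, fun d hd => hbdd z d hd⟩
  have hne : ∀ z : Fin n → ℝ, (A z).Nonempty := by
    intro z
    obtain ⟨s, hs⟩ := hSne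
    exact ⟨_, fun j => max (s j) (z j), hmono s _ hs (fun j => le_max_left _ _),
      fun j => le_max_right _ _, rfl⟩
  have hxx' : x ≤ x' := by
    intro j
    rw [hx' j]
    by_cases h : j ∈ D
    · simp only [h, if_true]
      have : 0 ≤ β / cj j := div_nonneg hβ0 (hc j).le
      linarith
    · simp [h]
  have hterm : ∀ j, cj j * x' j - cj j * x j = if j ∈ D then β else 0 := by
    intro j
    rw [hx' j]
    by_cases h : j ∈ D
    · have h0 : cj j ≠ 0 := (hc j).ne'
      simp only [h, if_true]
      field_simp
      ring
    · simp [h]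
  have hsum : (∑ j, cj j * x' j) - (∑ j, cj j * x j) = (D.card : ℝ) * β := by
    rw [← Finset.sum_sub_distrib]
    simp_rw [hterm]
    rw [Finset.sum_ite_mem, Finset.univ_inter, Finset.sum_const, nsmul_eq_mul]
  constructor
  · rw [hsum]
    exact mul_le_mul_of_nonneg_right hD hβ0
  · -- show sInf (A x') + β ≤ sInf (A x)
    rw [ge_iff_le, hdist x, hdist x'] at *
    have key : sInf (A x') + β ≤ sInf (A x) := by
      apply le_csInf (hne x)
      rintro d ⟨xhat, hxhatS, hxle, rfl⟩
      by_cases hx'S : x' ∈ S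
      · have h1 : sInf (A x') ≤ 0 :=
          csInf_le (hBdd x') ⟨x', hx'S, le_rfl, by ring⟩
        have h2 : β ≤ (∑ j, cj j * xhat j) - ∑ j, cj j * x j :=
          le_trans hβ (csInf_le (hBdd x) ⟨xhat, hxhatS, hxle, rfl⟩)
        linarith
      · obtain ⟨j₀, hj₀D, hj₀⟩ : ∃ j ∈ D, x' j < xhat j := by
          by_contra hcon
          push_neg at hcon
          apply hx'S
          have hw : (fun j => max (xhat j) (x' j)) ∈ S :=
            hmono _ _ hxhatS (fun j => le_max_left _ _)
          exact (hdep _ x' (fun j hj => max_eq_right (hcon j hj))).mp hw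
        set yhat : Fin n → ℝ := fun j => max (xhat j) (x' j) with hy
        have hyS : yhat ∈ S := hmono _ _ hxhatS (fun j => le_max_left _ _)
        have h1 : sInf (A x') ≤ (∑ j, cj j * yhat j) - ∑ j, cj j * x' j :=
          csInf_le (hBdd x') ⟨yhat, hyS, fun j => le_max_right _ _, rfl⟩
        have h2 : (∑ j, cj j * yhat j) - (∑ j, cj j * x' j)
            ≤ ((∑ j, cj j * xhat j) - ∑ j, cj j * x j) - β := by
          have hptw : ∀ j, cj j * yhat j - cj j * x' j
              ≤ (cj j * xhat j - cj j * x j) - (if j = j₀ then β else 0) := by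
            intro j
            by_cases hj : j = j₀
            · subst hj
              have hmax : yhat j = xhat j := max_eq_left hj₀.le
              have h0 : cj j ≠ 0 := (hc j).ne'
              rw [hmax, hx' j]
              simp only [hj₀D, if_true, if_pos rfl]
              field_simp
              ring_nf
              nlinarith [mul_pos (hc j) (hc j)]
            · simp only [hj, if_false, sub_zero]
              by_cases hle : xhat j ≤ x' j
              · have hmax : yhat j = x' j := max_eq_right hle
                rw [hmax]
                have : cj j * x j ≤ cj j * xhat j :=
                  mul_le_mul_of_nonneg_left (hxle j) (hc j).le
                linarith
              · push_neg at hle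
                have hmax : yhat j = xhat j := max_eq_left hle.le
                rw [hmax]
                have : cj j * x j ≤ cj j * x' j :=
                  mul_le_mul_of_nonneg_left (hxx' j) (hc j).le
                linarith
          calc (∑ j, cj j * yhat j) - (∑ j, cj j * x' j)
              = ∑ j, (cj j * yhat j - cj j * x' j) := by
                rw [Finset.sum_sub_distrib]
            _ ≤ ∑ j, ((cj j * xhat j - cj j * x j) - (if j = j₀ then β else 0)) :=
                Finset.sum_le_sum fun j _ => hptw j
            _ = ((∑ j, cj j * xhat j) - ∑ j, cj j * x j) - β := by
                rw [Finset.sum_sub_distrib, Finset.sum_sub_distrib]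
                congr 1
                rw [Finset.sum_ite_eq' Finset.univ j₀ (fun _ => β)]
                simp
        linarith
    linarith
end

section
/- For the CMIP step-size rule: let S' be the constraint ∑_{j∈J} A_j ⌊min(x_j,u_j)⌋ + ∑_{j∉J} A_j min(x_j,u_j) ≥ b with A_j ≥ 0, and suppose x ∉ S'. Any x̂ ≥ x with x̂ ∈ S' must either (i) have ⌊min(x̂_j,u_j)⌋ > ⌊min(x_j,u_j)⌋ for some j ∈ J with x_j < u_j, or (ii) satisfy ∑_{j∉J, x_j<u_j} A_j·(min(x̂_j,u_j) − x_j) ≥ b′, where b′ is the slack of S' at x. Consequently, with linear cost c, distance_c(x, S') ≥ min(β_J, β_{\bar J}) where β_J = min_{j∈J, x_j<u_j} c_j(1 − x_j + ⌊x_j⌋) and β_{\bar J} = min_{j∉J, x_j<u_j} c_j b′/A_j. -/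
theorem cmip_stepsize {n : ℕ} (A u cj : Fin n → ℝ) (b : ℝ)
    (hA : ∀ j, 0 ≤ A j) (hu : ∀ j, 0 < u j) (hcj : ∀ j, 0 < cj j)
    (J : Finset (Fin n)) (hJ : ∀ j ∈ J, 0 < A j)
    (lhs : (Fin n → ℝ) → ℝ)
    (hlhs : ∀ x, lhs x = (∑ j ∈ J, A j * ⌊min (x j) (u j)⌋) +
      ∑ j ∈ Jᶜ, A j * min (x j) (u j))
    (S' : Set (Fin n → ℝ)) (hS' : S' = {x | (∀ j, 0 ≤ x j) ∧ b ≤ lhs x})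
    (x : Fin n → ℝ) (hxnn : ∀ j, 0 ≤ x j) (hx : x ∉ S')
    (b' : ℝ) (hb' : b' = b - lhs x)
    (β : ℝ)
    (hβJ : ∀ j ∈ J, x j < u j → β ≤ cj j * (1 - x j + ⌊x j⌋))
    (hβJc : ∀ j ∈ Jᶜ, 0 < A j → x j < u j → β ≤ cj j * b' / A j) :
    ∀ xhat, x ≤ xhat → xhat ∈ S' →
      ((∃ j ∈ J, x j < u j ∧ ⌊min (x j) (u j)⌋ < ⌊min (xhat j) (u j)⌋) ∨
        b' ≤ ∑ j ∈ Jᶜ.filter (fun j => x j < u j), A j * (min (xhat j) (u j) - x j)) ∧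
        β ≤ ∑ j, cj j * (xhat j - x j) := by
  intro xhat hle hmem
  rw [hS'] at hx hmem
  have hxlt : lhs x < b := by
    by_contra h
    exact hx ⟨hxnn, le_of_not_gt h⟩
  have hb'pos : 0 < b' := by rw [hb']; linarith
  have hnn : ∀ j, 0 ≤ xhat j - x j := fun j => sub_nonneg.2 (hle j)
  have hsum_nn : ∀ j ∈ Finset.univ, 0 ≤ cj j * (xhat j - x j) :=
    fun j _ => mul_nonneg (hcj j).le (hnn j)
  by_cases hcase : ∃ j ∈ J, x j < u j ∧ ⌊min (x j) (u j)⌋ < ⌊min (xhat j) (u j)⌋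
  · refine ⟨Or.inl hcase, ?_⟩
    obtain ⟨j, hjJ, hju, hfl⟩ := hcase
    have hminx : min (x j) (u j) = x j := min_eq_left hju.le
    have h1 : (⌊x j⌋ : ℝ) + 1 ≤ min (xhat j) (u j) := by
      have : ⌊x j⌋ + 1 ≤ ⌊min (xhat j) (u j)⌋ := by rw [hminx] at hfl; omega
      calc ((⌊x j⌋ : ℝ) + 1) = ((⌊x j⌋ + 1 : ℤ) : ℝ) := by push_cast; ring
        _ ≤ (⌊min (xhat j) (u j)⌋ : ℝ) := by exact_mod_cast this
        _ ≤ min (xhat j) (u j) := Int.floor_le _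
    have h2 : (⌊x j⌋ : ℝ) + 1 ≤ xhat j := h1.trans (min_le_left _ _)
    have h3 : β ≤ cj j * (xhat j - x j) := by
      have := hβJ j hjJ hju
      have : cj j * (1 - x j + ⌊x j⌋) ≤ cj j * (xhat j - x j) := by
        apply mul_le_mul_of_nonneg_left _ (hcj j).le
        linarith
      linarith [hβJ j hjJ hju]
    calc β ≤ cj j * (xhat j - x j) := h3
      _ ≤ ∑ j, cj j * (xhat j - x j) :=
        Finset.single_le_sum hsum_nn (Finset.mem_univ j)
  · -- floors are equal on J
    push_neg at hcase
    have hfeq : ∀ j ∈ J, ⌊min (xhat j) (u j)⌋ = ⌊min (x j) (u j)⌋ := by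
      intro j hjJ
      rcases lt_or_ge (x j) (u j) with h | h
      · exact le_antisymm (hcase j hjJ h)
          (Int.floor_le_floor (min_le_min (hle j) le_rfl))
      · have h1 : min (x j) (u j) = u j := min_eq_right h
        have h2 : min (xhat j) (u j) = u j := min_eq_right (h.trans (hle j))
        rw [h1, h2]
    have hkey : b' ≤ ∑ j ∈ Jᶜ.filter (fun j => x j < u j),
        A j * (min (xhat j) (u j) - x j) := by
      have hb2 : b ≤ lhs xhat := hmem.2
      have hE : ∑ j ∈ Jᶜ, A j * (min (xhat j) (u j) - min (x j) (u j)) =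
          ∑ j ∈ Jᶜ.filter (fun j => x j < u j), A j * (min (xhat j) (u j) - x j) := by
        rw [← Finset.sum_filter_add_sum_filter_not Jᶜ (fun j => x j < u j)]
        have hz : ∑ j ∈ Jᶜ.filter (fun j => ¬ x j < u j),
            A j * (min (xhat j) (u j) - min (x j) (u j)) = 0 := by
          apply Finset.sum_eq_zero
          intro j hj
          have h := (Finset.mem_filter.1 hj).2
          push_neg at h
          rw [min_eq_right h, min_eq_right (h.trans (hle j))]
          ring
        rw [hz, add_zero]
        apply Finset.sum_congr rfl
        intro j hj
        have h := (Finset.mem_filter.1 hj).2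
        rw [min_eq_left h.le]
      have hJeq : ∑ j ∈ J, A j * (⌊min (xhat j) (u j)⌋ : ℝ) =
          ∑ j ∈ J, A j * (⌊min (x j) (u j)⌋ : ℝ) := by
        apply Finset.sum_congr rfl
        intro j hj; rw [hfeq j hj]
      have := hlhs x
      have := hlhs xhat
      rw [← hE]
      have hsplit : lhs xhat - lhs x =
          ∑ j ∈ Jᶜ, A j * (min (xhat j) (u j) - min (x j) (u j)) := by
        rw [hlhs x, hlhs xhat, hJeq]
        simp only [mul_sub, Finset.sum_sub_distrib]
        ring
      linarith [hsplit, hb2, hb'.symm ▸ hb'pos, hb']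
    refine ⟨Or.inr hkey, ?_⟩
    by_cases hβpos : 0 < β
    · -- β > 0 case
      set T := Jᶜ.filter (fun j => x j < u j) with hT
      have hstep : b' ≤ ∑ j ∈ T, A j * (xhat j - x j) := by
        refine hkey.trans (Finset.sum_le_sum ?_)
        intro j _
        apply mul_le_mul_of_nonneg_left _ (hA j)
        have := min_le_left (xhat j) (u j)
        linarith
      have hterm : ∀ j ∈ T, β / b' * (A j * (xhat j - x j)) ≤ cj j * (xhat j - x j) := by
        intro j hj
        obtain ⟨hjc, hju⟩ := Finset.mem_filter.1 hj
        rcases eq_or_lt_of_le (hA j) with h0 | h0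
        · rw [← h0]; simp [mul_nonneg (hcj j).le (hnn j)]
        · have hb := hβJc j hjc h0 hju
          have hc : β / b' * A j ≤ cj j := by
            rw [div_mul_eq_mul_div, div_le_iff₀ hb'pos]
            calc β * A j ≤ cj j * b' / A j * A j :=
              mul_le_mul_of_nonneg_right hb h0.le
            _ = cj j * b' := by field_simp
          calc β / b' * (A j * (xhat j - x j)) = (β / b' * A j) * (xhat j - x j) := by ring
            _ ≤ cj j * (xhat j - x j) := mul_le_mul_of_nonneg_right hc (hnn j)
      calc β = β / b' * b' := by field_simp
        _ ≤ β / b' * ∑ j ∈ T, A j * (xhat j - x j) :=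
          mul_le_mul_of_nonneg_left hstep (div_nonneg hβpos.le hb'pos.le)
        _ = ∑ j ∈ T, β / b' * (A j * (xhat j - x j)) := Finset.mul_sum _ _ _
        _ ≤ ∑ j ∈ T, cj j * (xhat j - x j) := Finset.sum_le_sum hterm
        _ ≤ ∑ j, cj j * (xhat j - x j) :=
          Finset.sum_le_sum_of_subset_of_nonneg (Finset.subset_univ T)
            (fun j hj _ => hsum_nn j hj)
    · push_neg at hβpos
      exact hβpos.trans (Finset.sum_nonneg hsum_nn)
end
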